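/- arXiv:2510.25582 — 5 statements merged into one kernel-verified Lean document; each statement's English description precedes it below -/
import Mathlib

section
/- Let r ≥ 4. A partial strategy Y = (y_i)_{i=0}^{l} is r-extendable if and only if Y is partially r-robust and (Σ_{i=0}^{l} y_i)/y_l ≤ (r + √(r(r−4)))/2. -/
/-- A bidding strategy: a strictly increasing sequence of positive reals tending to infinity. -/
def IsBiddingStrategy (X : ℕ → ℝ) : Prop :=
  StrictMono X ∧ (∀ i, 0 < X i) ∧ Filter.Tendsto X Filter.atTop Filter.atTop

/-- A bidding strategy is `r`-robust if `x 0 ≤ r` and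
`x (i+1) ≤ r * x i - ∑_{j ≤ i} x j` for all `i`. -/
def IsRobust (r : ℝ) (X : ℕ → ℝ) : Prop :=
  X 0 ≤ r ∧ ∀ i, X (i + 1) ≤ r * X i - ∑ j ∈ Finset.range (i + 1), X j

/-- A partial strategy with bids `Y 0, …, Y l`: positive and strictly increasing. -/
def IsPartialStrategy (Y : ℕ → ℝ) (l : ℕ) : Prop :=
  (∀ i, i ≤ l → 0 < Y i) ∧ ∀ i, i < l → Y i < Y (i + 1)

/-- The partial strategy `Y` (indexed `0, …, l`) is partially `r`-robust. -/
def IsPartiallyRobust (r : ℝ) (Y : ℕ → ℝ) (l : ℕ) : Prop :=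
  Y 0 ≤ r ∧ ∀ i, i < l → Y (i + 1) ≤ r * Y i - ∑ j ∈ Finset.range (i + 1), Y j

/-- The concatenation `(Y 0, …, Y l, Z 0, Z 1, …)`. -/
def concat (Y : ℕ → ℝ) (l : ℕ) (Z : ℕ → ℝ) : ℕ → ℝ :=
  fun i => if i ≤ l then Y i else Z (i - (l + 1))

/-- `Y` (with bids indexed `0, …, l`) is `r`-extendable if it can be completed
to an `r`-robust bidding strategy. -/
def IsRExtendable (r : ℝ) (Y : ℕ → ℝ) (l : ℕ) : Prop :=
  ∃ Z : ℕ → ℝ, IsBiddingStrategy (concat Y l Z) ∧ IsRobust r (concat Y l Z)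

/-!
Both `φ = (r + √(r(r-4)))/2` and `ψ = (r - √(r(r-4)))/2` are roots of `t² - r t + r`.
Write `σₙ = (∑_{j ≤ n} xⱼ) / xₙ`. Robustness says `xₙ₊₁ ≤ (r - σₙ) xₙ`, hence
`σₙ₊₁ ≥ 1 + σₙ / (r - σₙ) = σₙ + (σₙ - φ)(σₙ - ψ) / (r - σₙ)`, while `xₙ < xₙ₊₁` forces `σₙ < r - 1`.
Once `σₙ = φ + ε` with `ε > 0`, the ratio grows by at least `ε² / r` per step, which is impossible.
Conversely, if `σₗ ≤ φ`, continuing geometrically with ratio `ψ > 1` keeps `σₙ ≤ φ`, and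
`σₙ ≤ φ` is exactly the robustness of the step `xₙ₊₁ = ψ xₙ` because `φ + ψ = φ ψ = r`.
-/

open Finset

noncomputable def upperRoot (r : ℝ) : ℝ := (r + √(r * (r - 4))) / 2

noncomputable def lowerRoot (r : ℝ) : ℝ := (r - √(r * (r - 4))) / 2

noncomputable def sumRatio (X : ℕ → ℝ) (n : ℕ) : ℝ := (∑ j ∈ range (n + 1), X j) / X n

section Roots

variable {r : ℝ}

lemma upperRoot_add_lowerRoot (r : ℝ) : upperRoot r + lowerRoot r = r := by
  unfold upperRoot lowerRoot; ring

lemma upperRoot_mul_lowerRoot (hr : 4 ≤ r) : upperRoot r * lowerRoot r = r := by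
  have h := Real.sq_sqrt (show 0 ≤ r * (r - 4) by nlinarith)
  unfold upperRoot lowerRoot
  linear_combination (-1 / 4 : ℝ) * h

lemma lowerRoot_le_upperRoot (r : ℝ) : lowerRoot r ≤ upperRoot r := by
  unfold upperRoot lowerRoot
  linarith [Real.sqrt_nonneg (r * (r - 4))]

lemma one_lt_lowerRoot (hr : 4 ≤ r) : 1 < lowerRoot r := by
  have : √(r * (r - 4)) < r - 2 := (Real.sqrt_lt' (by linarith)).2 (by nlinarith)
  unfold lowerRoot
  linarith

lemma sub_upperRoot_mul_sub_lowerRoot (hr : 4 ≤ r) (s : ℝ) :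
    (s - upperRoot r) * (s - lowerRoot r) = s ^ 2 - r * s + r := by
  linear_combination (-s) * upperRoot_add_lowerRoot r + upperRoot_mul_lowerRoot hr

end Roots

section Robustness

variable {r : ℝ} {X Y : ℕ → ℝ} {l : ℕ}

lemma sum_range_succ_congr {n : ℕ} (h : ∀ i ≤ n, X i = Y i) :
    ∑ j ∈ range (n + 1), X j = ∑ j ∈ range (n + 1), Y j :=
  sum_congr rfl fun j hj => h j (Nat.lt_succ_iff.mp (mem_range.mp hj))

lemma isPartiallyRobust_congr (h : ∀ i ≤ l, X i = Y i) :
    IsPartiallyRobust r X l ↔ IsPartiallyRobust r Y l := by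
  unfold IsPartiallyRobust
  rw [h 0 l.zero_le]
  refine and_congr_right fun _ => forall₂_congr fun i hi => ?_
  rw [h (i + 1) hi, h i hi.le, sum_range_succ_congr fun j hj => h j (hj.trans hi.le)]

lemma isRobust_iff_isPartiallyRobust_and_forall_ge (l : ℕ) :
    IsRobust r X ↔ IsPartiallyRobust r X l ∧
      ∀ i, l ≤ i → X (i + 1) ≤ r * X i - ∑ j ∈ range (i + 1), X j :=
  ⟨fun h => ⟨⟨h.1, fun i _ => h.2 i⟩, fun i _ => h.2 i⟩,
    fun h => ⟨h.1.1, fun i => (lt_or_ge i l).elim (h.1.2 i) (h.2 i)⟩⟩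

lemma concat_of_le (Y : ℕ → ℝ) (Z : ℕ → ℝ) {i : ℕ} (hi : i ≤ l) : concat Y l Z i = Y i :=
  if_pos hi

end Robustness

section SumRatio

variable {r : ℝ} {X : ℕ → ℝ} {n : ℕ}

lemma sumRatio_lt (hx : 0 < X n) (hlt : X n < X (n + 1))
    (hrob : X (n + 1) ≤ r * X n - ∑ j ∈ range (n + 1), X j) : sumRatio X n < r - 1 := by
  rw [sumRatio, div_lt_iff₀ hx]
  linarith

lemma add_sq_div_le_one_add_div (hr : 4 ≤ r) {σ ε : ℝ} (hε : 0 ≤ ε)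
    (hσ : upperRoot r + ε ≤ σ) (hσr : σ < r) : σ + ε ^ 2 / r ≤ 1 + σ / (r - σ) := by
  have hψ := one_lt_lowerRoot hr
  have hψφ := lowerRoot_le_upperRoot r
  have hrσ : 0 < r - σ := sub_pos.mpr hσr
  calc σ + ε ^ 2 / r ≤ σ + ε ^ 2 / (r - σ) := by gcongr; linarith
    _ ≤ σ + (σ - upperRoot r) * (σ - lowerRoot r) / (r - σ) := by
        rw [sq]; gcongr <;> linarith
    _ = 1 + σ / (r - σ) := by
        rw [sub_upperRoot_mul_sub_lowerRoot hr]
        field_simp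
        ring

lemma one_add_div_le_sumRatio_succ (hx : 0 < X n) (hx' : 0 < X (n + 1)) (hσ : 0 ≤ sumRatio X n)
    (hrob : X (n + 1) ≤ r * X n - ∑ j ∈ range (n + 1), X j) :
    1 + sumRatio X n / (r - sumRatio X n) ≤ sumRatio X (n + 1) := by
  set σ := sumRatio X n
  have hS : ∑ j ∈ range (n + 1), X j = σ * X n := (div_mul_cancel₀ _ hx.ne').symm
  have hbound : X (n + 1) ≤ (r - σ) * X n := by linarith
  have hrσ : 0 < r - σ := pos_of_mul_pos_left (hx'.trans_le hbound) hx.le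
  calc 1 + σ / (r - σ) = 1 + σ * X n / ((r - σ) * X n) := by rw [mul_div_mul_right _ _ hx.ne']
    _ ≤ 1 + σ * X n / X (n + 1) := by gcongr
    _ = sumRatio X (n + 1) := by
        rw [sumRatio, sum_range_succ, hS]
        field_simp
        ring

theorem sumRatio_le_upperRoot (hr : 4 ≤ r) (hpos : ∀ i, 0 < X i) (hmono : StrictMono X)
    (hrob : ∀ i, X (i + 1) ≤ r * X i - ∑ j ∈ range (i + 1), X j) (n : ℕ) :
    sumRatio X n ≤ upperRoot r := by
  have hbound : ∀ m, sumRatio X m < r - 1 := fun m =>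
    sumRatio_lt (hpos m) (hmono m.lt_succ_self) (hrob m)
  have hnonneg : ∀ m, 0 ≤ sumRatio X m := fun m =>
    div_nonneg (sum_nonneg fun j _ => (hpos j).le) (hpos m).le
  by_contra! hlt
  set ε := sumRatio X n - upperRoot r
  have hε : 0 < ε := sub_pos.mpr hlt
  have hgrowth : ∀ k : ℕ, sumRatio X n + k * (ε ^ 2 / r) ≤ sumRatio X (n + k) := by
    intro k
    induction k with
    | zero => simp
    | succ k ih =>
      have hσ : upperRoot r + ε ≤ sumRatio X (n + k) := by
        have : 0 ≤ (k : ℝ) * (ε ^ 2 / r) := by positivity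
        linarith
      have hstep := (add_sq_div_le_one_add_div hr hε.le hσ (by linarith [hbound (n + k)])).trans
        (one_add_div_le_sumRatio_succ (hpos _) (hpos _) (hnonneg _) (hrob (n + k)))
      rw [← add_assoc]
      push_cast
      linarith
  have hδ : 0 < ε ^ 2 / r := by positivity
  obtain ⟨k, hk⟩ := exists_nat_gt ((r - 1 - sumRatio X n) / (ε ^ 2 / r))
  rw [div_lt_iff₀ hδ] at hk
  linarith [hgrowth k, hbound (n + k)]

end SumRatio

section GeometricExtension

variable {r : ℝ} {X Y : ℕ → ℝ} {l : ℕ}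

lemma sum_range_le_upperRoot_mul_of_geometric (hr : 4 ≤ r)
    (hstep : ∀ i, l ≤ i → X (i + 1) = lowerRoot r * X i)
    (hl : ∑ j ∈ range (l + 1), X j ≤ upperRoot r * X l) :
    ∀ i, l ≤ i → ∑ j ∈ range (i + 1), X j ≤ upperRoot r * X i := by
  intro i hi
  induction i, hi using Nat.le_induction with
  | base => exact hl
  | succ i hi ih =>
    have hr' : r * X i = upperRoot r * X i + lowerRoot r * X i := by
      rw [← add_mul, upperRoot_add_lowerRoot]
    rw [sum_range_succ, hstep i hi, ← mul_assoc, upperRoot_mul_lowerRoot hr]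
    linarith

lemma robust_step_of_geometric (hr : 4 ≤ r)
    (hstep : ∀ i, l ≤ i → X (i + 1) = lowerRoot r * X i)
    (hl : ∑ j ∈ range (l + 1), X j ≤ upperRoot r * X l) :
    ∀ i, l ≤ i → X (i + 1) ≤ r * X i - ∑ j ∈ range (i + 1), X j := by
  intro i hi
  have := sum_range_le_upperRoot_mul_of_geometric hr hstep hl i hi
  have hr' : r * X i = upperRoot r * X i + lowerRoot r * X i := by
    rw [← add_mul, upperRoot_add_lowerRoot]
  rw [hstep i hi]
  linarith

lemma concat_geometric_add (Y : ℕ → ℝ) (q : ℝ) (k : ℕ) :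
    concat Y l (fun k => Y l * q ^ (k + 1)) (l + k) = Y l * q ^ k := by
  cases k with
  | zero => simp [concat]
  | succ k => simp [concat, show l + (k + 1) - (l + 1) = k by omega]

lemma isBiddingStrategy_concat_geometric {q : ℝ} (hY : IsPartialStrategy Y l) (hq : 1 < q) :
    IsBiddingStrategy (concat Y l (fun k => Y l * q ^ (k + 1))) := by
  obtain ⟨hYpos, hYmono⟩ := hY
  have hy : 0 < Y l := hYpos l le_rfl
  refine ⟨strictMono_nat_of_lt_succ fun i => ?_, fun i => ?_, ?_⟩
  · rcases lt_or_ge i l with hi | hi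
    · rw [concat_of_le Y _ hi.le, concat_of_le Y _ hi]
      exact hYmono i hi
    · obtain ⟨k, rfl⟩ := Nat.exists_eq_add_of_le hi
      rw [concat_geometric_add, add_assoc, concat_geometric_add, pow_succ, ← mul_assoc]
      exact lt_mul_of_one_lt_right (by positivity) hq
  · rcases le_or_gt i l with hi | hi
    · rw [concat_of_le Y _ hi]
      exact hYpos i hi
    · obtain ⟨k, rfl⟩ := Nat.exists_eq_add_of_le hi.le
      rw [concat_geometric_add]
      positivity
  · rw [← Filter.tendsto_add_atTop_iff_nat l]
    simp_rw [add_comm _ l, concat_geometric_add]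
    exact (tendsto_pow_atTop_atTop_of_one_lt hq).const_mul_atTop hy

end GeometricExtension

theorem stmt2 (r : ℝ) (hr : 4 ≤ r) (Y : ℕ → ℝ) (l : ℕ) (hY : IsPartialStrategy Y l) :
    IsRExtendable r Y l ↔
      (IsPartiallyRobust r Y l ∧
        (∑ i ∈ Finset.range (l + 1), Y i) / Y l ≤ (r + Real.sqrt (r * (r - 4))) / 2) := by
  constructor
  · rintro ⟨Z, ⟨hmono, hpos, -⟩, hrob⟩
    have hagree : ∀ i ≤ l, concat Y l Z i = Y i := fun i => concat_of_le Y Z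
    refine ⟨(isPartiallyRobust_congr hagree).1
      ((isRobust_iff_isPartiallyRobust_and_forall_ge l).1 hrob).1, ?_⟩
    have := sumRatio_le_upperRoot hr hpos hmono hrob.2 l
    rwa [sumRatio, sum_range_succ_congr hagree, hagree l le_rfl] at this
  · rintro ⟨hpart, hratio⟩
    set X := concat Y l (fun k => Y l * lowerRoot r ^ (k + 1))
    have hagree : ∀ i ≤ l, X i = Y i := fun i => concat_of_le Y _
    have htail : ∀ k, X (l + k) = Y l * lowerRoot r ^ k := concat_geometric_add Y _
    have hstep : ∀ i, l ≤ i → X (i + 1) = lowerRoot r * X i := by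
      intro i hi
      obtain ⟨k, rfl⟩ := Nat.exists_eq_add_of_le hi
      rw [add_assoc, htail, htail]
      ring
    have hl : ∑ j ∈ range (l + 1), X j ≤ upperRoot r * X l := by
      rw [sum_range_succ_congr hagree, hagree l le_rfl]
      exact (div_le_iff₀ (hY.1 l le_rfl)).1 hratio
    refine ⟨_, isBiddingStrategy_concat_geometric hY (one_lt_lowerRoot hr),
      (isRobust_iff_isPartiallyRobust_and_forall_ge l).2
        ⟨(isPartiallyRobust_congr hagree).2 hpart, robust_step_of_geometric hr hstep hl⟩⟩
end

section
/- Let 1 ≤ m ≤ M, let μ be a probability measure supported on [m,M], let c > 1, and let q : [m,M] → [1,∞) be a measurable map satisfying z ≤ q(z) ≤ e^{1/c}·z for all z ∈ [m,M]. Then for every bidding strategy X, cons(X,μ) ≤ e^{1/c} · cons(X, q_*μ), where q_*μ denotes the pushforward of μ under q. -/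
/-!
The cost of a bidding strategy is monotone in the target, so replacing every target `z` by the
larger `q z` can only raise the expected cost, while it raises the expected target by at most the
factor `e^{1/c}`. Hence `E[cost z] / E[z] ≤ E[cost (q z)] / E[z] ≤ e^{1/c} E[cost (q z)] / E[q z]`.
-/

open MeasureTheory

/-- The least index `i` such that the bid `X i` reaches the target `u`. -/
noncomputable def costIdx (X : ℕ → ℝ) (u : ℝ) : ℕ := sInf {i : ℕ | u ≤ X i}

/-- The cost of bidding strategy `X` on target `u`: the sum of bids up to and
including the first bid that is at least `u`. -/
noncomputable def cost (X : ℕ → ℝ) (u : ℝ) : ℝ :=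
  ∑ j ∈ Finset.range (costIdx X u + 1), X j

/-- The consistency of `X` with respect to a distributional prediction `μ`:
the ratio of the expected cost to the expected target. -/
noncomputable def consM (X : ℕ → ℝ) (μ : Measure ℝ) : ℝ :=
  (∫ z, cost X z ∂μ) / (∫ z, z ∂μ)

open Set Filter

lemma cost_nonneg {X : ℕ → ℝ} (hX : ∀ i, 0 ≤ X i) (u : ℝ) : 0 ≤ cost X u :=
  Finset.sum_nonneg fun i _ => hX i

lemma costIdx_mono {X : ℕ → ℝ} (hX : Tendsto X atTop atTop) : Monotone (costIdx X) := by
  intro u v huv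
  have hne : {i : ℕ | v ≤ X i}.Nonempty := (hX.eventually (eventually_ge_atTop v)).exists
  exact csInf_le_csInf (OrderBot.bddBelow _) hne fun i hi => huv.trans hi

lemma cost_mono {X : ℕ → ℝ} (hpos : ∀ i, 0 ≤ X i) (htop : Tendsto X atTop atTop) :
    Monotone (cost X) := fun _ _ huv =>
  Finset.sum_le_sum_of_subset_of_nonneg
    (Finset.range_subset_range.2 (Nat.succ_le_succ (costIdx_mono htop huv)))
    fun i _ _ => hpos i

lemma IsBiddingStrategy.monotone_cost {X : ℕ → ℝ} (hX : IsBiddingStrategy X) :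
    Monotone (cost X) :=
  cost_mono (fun i => (hX.2.1 i).le) hX.2.2

lemma Monotone.integrable_comp_of_ae_mem_Icc {α : Type*} [MeasurableSpace α] {μ : Measure α}
    [IsFiniteMeasure μ] {f : ℝ → ℝ} (hf : Monotone f) {g : α → ℝ} (hg : Measurable g)
    {a b : ℝ} (h : ∀ᵐ x ∂μ, g x ∈ Icc a b) : Integrable (fun x => f (g x)) μ :=
  Integrable.of_mem_Icc (f a) (f b) (hf.measurable.comp hg).aemeasurable <|
    h.mono fun _ hx => ⟨hf hx.1, hf hx.2⟩

lemma div_le_mul_div_of_le_of_le {A A' B C E : ℝ} (hA : 0 ≤ A) (hAA' : A ≤ A') (hB : 0 < B)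
    (hC : 0 < C) (hCB : C ≤ E * B) : A / B ≤ E * (A' / C) :=
  calc A / B ≤ A' / B := by gcongr
    _ ≤ E * (A' / C) := by
      rw [mul_div_assoc', div_le_div_iff₀ hB hC]
      nlinarith

theorem stmt4_general (m M c : ℝ) (hm : 1 ≤ m)
    (μ : Measure ℝ) [IsProbabilityMeasure μ] (hsupp : μ ((Set.Icc m M)ᶜ) = 0)
    (q : ℝ → ℝ) (hq : Measurable q)
    (hq1 : ∀ z ∈ Set.Icc m M, z ≤ q z)
    (hq2 : ∀ z ∈ Set.Icc m M, q z ≤ Real.exp (1 / c) * z)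
    (X : ℕ → ℝ) (hX : IsBiddingStrategy X) :
    consM X μ ≤ Real.exp (1 / c) * consM X (μ.map q) := by
  set E := Real.exp (1 / c)
  have hmem : ∀ᵐ z ∂μ, z ∈ Icc m M := ae_iff.2 hsupp
  have hqmem : ∀ᵐ z ∂μ, q z ∈ Icc m (E * M) := hmem.mono fun z hz =>
    ⟨hz.1.trans (hq1 z hz), (hq2 z hz).trans (by gcongr; exact hz.2)⟩
  have hcost := hX.monotone_cost
  have hint_id : Integrable (fun z => z) μ :=
    monotone_id.integrable_comp_of_ae_mem_Icc measurable_id hmem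
  have hint_q : Integrable q μ := monotone_id.integrable_comp_of_ae_mem_Icc hq hqmem
  have hint_cost : Integrable (cost X) μ :=
    hcost.integrable_comp_of_ae_mem_Icc measurable_id hmem
  have hint_cost_q : Integrable (fun z => cost X (q z)) μ :=
    hcost.integrable_comp_of_ae_mem_Icc hq hqmem
  have hm_le : m ≤ ∫ z, z ∂μ := by
    simpa using integral_mono_ae (integrable_const m) hint_id (hmem.mono fun z hz => hz.1)
  have hid_le_q : ∫ z, z ∂μ ≤ ∫ z, q z ∂μ :=
    integral_mono_ae hint_id hint_q (hmem.mono hq1)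
  have hq_le : ∫ z, q z ∂μ ≤ E * ∫ z, z ∂μ := by
    rw [← integral_const_mul]
    exact integral_mono_ae hint_q (hint_id.const_mul E) (hmem.mono hq2)
  rw [consM, consM, integral_map (f := fun z => z) hq.aemeasurable aestronglyMeasurable_id,
    integral_map hq.aemeasurable hcost.measurable.aestronglyMeasurable]
  exact div_le_mul_div_of_le_of_le
    (integral_nonneg <| cost_nonneg fun i => (hX.2.1 i).le)
    (integral_mono_ae hint_cost hint_cost_q (hmem.mono fun z hz => hcost (hq1 z hz)))
    (by linarith) (by linarith) hq_le

theorem stmt4 (m M c : ℝ) (hm : 1 ≤ m) (hmM : m ≤ M) (hc : 1 < c)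
    (μ : Measure ℝ) [IsProbabilityMeasure μ] (hsupp : μ ((Set.Icc m M)ᶜ) = 0)
    (q : ℝ → ℝ) (hq : Measurable q)
    (hq1 : ∀ z ∈ Set.Icc m M, z ≤ q z)
    (hq2 : ∀ z ∈ Set.Icc m M, q z ≤ Real.exp (1 / c) * z)
    (X : ℕ → ℝ) (hX : IsBiddingStrategy X) :
    consM X μ ≤ Real.exp (1 / c) * consM X (μ.map q) :=
  stmt4_general m M c hm μ hsupp q hq hq1 hq2 X hX
end

section
/- Let a > 1, δ ∈ [0,1), and λ ∈ [1,a). For the randomized strategy R_{δ,a} whose bids are x_i = λ·a^{i+s} with s drawn uniformly from [δ,1), and for every target u ≥ λ, the expected performance ratio satisfies (1/((1−δ)·u)) · ∫_δ^1 cost((λ a^{i+s})_{i≥0}, u) ds ≤ a(a−a^δ) / ((a−1)(1−δ) ln a). -/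
open Real Set MeasureTheory

theorem integral_const_rpow {a : ℝ} (ha : 0 < a) (ha1 : a ≠ 1) (p q : ℝ) :
    ∫ x in p..q, a ^ x = (a ^ q - a ^ p) / log a := by
  have hlog : log a ≠ 0 := log_ne_zero_of_pos_of_ne_one ha ha1
  have hderiv (x : ℝ) : HasDerivAt (fun y => a ^ y / log a) (a ^ x) x := by
    simpa [hlog] using (hasStrictDerivAt_const_rpow ha x).hasDerivAt.div_const (log a)
  rw [intervalIntegral.integral_eq_sub_of_hasDerivAt (fun x _ => hderiv x)
    ((continuous_const_rpow ha.ne').intervalIntegrable p q), sub_div]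

theorem sum_range_succ_rpow_le {a : ℝ} (ha : 1 < a) (s : ℝ) (n : ℕ) :
    ∑ j ∈ Finset.range (n + 1), a ^ ((j : ℝ) + s) ≤ a / (a - 1) * a ^ ((n : ℝ) + s) := by
  have ha0 : 0 < a := one_pos.trans ha
  simp only [rpow_add ha0, rpow_natCast, ← Finset.sum_mul, geom_sum_eq ha.ne']
  calc (a ^ (n + 1) - 1) / (a - 1) * a ^ s ≤ a ^ (n + 1) / (a - 1) * a ^ s := by
        gcongr
        exact sub_le_self _ zero_le_one
    _ = a / (a - 1) * (a ^ n * a ^ s) := by ring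

/-- With bids `lam * a ^ (i + s)` and target `lam * a ^ t`, the bid that reaches the target is
`lam * a ^ finalBidExponent t s`. -/
noncomputable def finalBidExponent (t s : ℝ) : ℝ := s + (⌈t - s⌉.toNat : ℝ)

theorem costIdx_geometric {a lam : ℝ} (ha : 1 < a) (hlam : 0 < lam) (t s : ℝ) :
    costIdx (fun i : ℕ => lam * a ^ ((i : ℝ) + s)) (lam * a ^ t) = ⌈t - s⌉.toNat := by
  have hreach : {i : ℕ | lam * a ^ t ≤ lam * a ^ ((i : ℝ) + s)} = Ici ⌈t - s⌉.toNat := by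
    ext i
    rw [mem_ofPred_eq, mem_Ici, mul_le_mul_iff_right₀ hlam, rpow_le_rpow_left_iff ha,
      ← sub_le_iff_le_add, ← Int.cast_natCast, ← Int.ceil_le, Int.toNat_le]
  rw [costIdx, hreach, csInf_Ici]

theorem cost_geometric_le {a lam : ℝ} (ha : 1 < a) (hlam : 0 < lam) (t s : ℝ) :
    cost (fun i : ℕ => lam * a ^ ((i : ℝ) + s)) (lam * a ^ t) ≤
      lam * a / (a - 1) * a ^ finalBidExponent t s := by
  rw [cost, costIdx_geometric ha hlam, ← Finset.mul_sum, mul_div_assoc, mul_assoc,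
    finalBidExponent, add_comm s]
  exact mul_le_mul_of_nonneg_left (sum_range_succ_rpow_le ha s _) hlam.le

theorem integral_rpow_finalBidExponent_of_ceil_eq {a t p q : ℝ} {k : ℕ} (ha : 0 < a)
    (ha1 : a ≠ 1) (hpq : p ≤ q) (hk : ∀ s ∈ Ioo p q, ⌈t - s⌉.toNat = k) :
    IntervalIntegrable (fun s => a ^ finalBidExponent t s) volume p q ∧
      ∫ s in p..q, a ^ finalBidExponent t s = (a ^ (q + k) - a ^ (p + k)) / log a := by
  have heq : EqOn (fun s => a ^ finalBidExponent t s) (fun s => a ^ (s + k)) (uIoo p q) := by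
    intro s hs
    rw [uIoo_of_le hpq] at hs
    simp only [finalBidExponent, hk s hs]
  refine ⟨(((continuous_const_rpow ha.ne').comp (continuous_add_const _)).intervalIntegrable
    p q).congr_uIoo heq.symm, ?_⟩
  rw [intervalIntegral.integral_congr_uIoo heq,
    intervalIntegral.integral_comp_add_right (fun x => a ^ x), integral_const_rpow ha ha1]

theorem integral_rpow_finalBidExponent_le {a t δ : ℝ} (ha : 1 < a) (ht : 0 ≤ t) (hδ0 : 0 ≤ δ)
    (hδ1 : δ < 1) :
    IntervalIntegrable (fun s => a ^ finalBidExponent t s) volume δ 1 ∧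
      ∫ s in δ..1, a ^ finalBidExponent t s ≤ a ^ t * (a - a ^ δ) / log a := by
  have ha0 : 0 < a := one_pos.trans ha
  have hlog : 0 < log a := log_pos ha
  have haδ : 1 ≤ a ^ δ := one_le_rpow ha.le hδ0
  have haδa : a ^ δ ≤ a := by simpa using rpow_le_rpow_of_exponent_le ha.le hδ1.le
  set m := ⌈t - δ⌉.toNat
  have hm : (m : ℝ) = ⌈t - δ⌉ := by
    rw [← Int.cast_natCast, Int.toNat_of_nonneg (Int.ceil_nonneg_of_neg_one_lt (by linarith))]
  have hm_ge : t - δ ≤ m := hm ▸ Int.le_ceil _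
  have hm_lt : (m : ℝ) < t - δ + 1 := hm ▸ Int.ceil_lt_add_one _
  have hceil {k : ℕ} {s : ℝ} (h₁ : (k : ℝ) - 1 < t - s) (h₂ : t - s ≤ k) : ⌈t - s⌉.toNat = k := by
    rw [(Int.ceil_eq_iff (z := k)).mpr ⟨by push_cast; exact h₁, by push_cast; exact h₂⟩,
      Int.toNat_natCast]
  -- The final bid has index `m` for `s ∈ (δ, c)` and index `m - 1` for `s ∈ (c, c + 1)`.
  set c := t + 1 - m with hc
  have hδc : δ < c := by linarith
  rcases le_or_gt 1 c with h1c | hc1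
  · obtain ⟨hint, heq⟩ := integral_rpow_finalBidExponent_of_ceil_eq ha0 ha.ne' hδ1.le
      (k := m) fun s hs => hceil (by linarith [hs.2]) (by linarith [hs.1])
    refine ⟨hint, heq ▸ ?_⟩
    have hmt : a ^ (m : ℝ) ≤ a ^ t := rpow_le_rpow_of_exponent_le ha.le (by linarith)
    have hgap : 0 ≤ a - a ^ δ := sub_nonneg.mpr haδa
    rw [rpow_add ha0, rpow_add ha0, rpow_one, ← sub_mul, mul_comm (a ^ t)]
    gcongr
  · obtain ⟨k, hk⟩ : ∃ k, m = k + 1 :=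
      Nat.exists_eq_add_one_of_ne_zero (Nat.cast_pos.mp (by linarith : (0 : ℝ) < m)).ne'
    have hkm : (k : ℝ) = m - 1 := by rw [hk]; push_cast; ring
    obtain ⟨hint₁, heq₁⟩ := integral_rpow_finalBidExponent_of_ceil_eq ha0 ha.ne' hδc.le (k := m)
      fun s hs => hceil (by linarith [hs.2]) (by linarith [hs.1])
    obtain ⟨hint₂, heq₂⟩ := integral_rpow_finalBidExponent_of_ceil_eq ha0 ha.ne' hc1.le (k := k)
      fun s hs => hceil (by linarith [hs.2]) (by linarith [hs.1])
    refine ⟨hint₁.trans hint₂, ?_⟩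
    have htm : a ^ t ≤ a ^ (m : ℝ) := rpow_le_rpow_of_exponent_le ha.le (by linarith)
    rw [← intervalIntegral.integral_add_adjacent_intervals hint₁ hint₂, heq₁, heq₂,
      show c + m = t + 1 by linarith, show c + k = t by linarith, show (1 : ℝ) + k = m by linarith,
      rpow_add ha0, rpow_add ha0, rpow_one, ← add_div, div_le_div_iff_of_pos_right hlog]
    nlinarith [mul_nonneg (sub_nonneg.mpr haδ) (sub_nonneg.mpr htm)]

theorem stmt7 (a δ lam : ℝ) (ha : 1 < a) (hδ : δ ∈ Set.Ico (0:ℝ) 1)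
    (hlam : lam ∈ Set.Ico (1:ℝ) a) (u : ℝ) (hu : lam ≤ u) :
    (1 / ((1 - δ) * u)) *
        (∫ s in δ..1, cost (fun i : ℕ => lam * a ^ ((i : ℝ) + s)) u) ≤
      a * (a - a ^ δ) / ((a - 1) * (1 - δ) * Real.log a) := by
  obtain ⟨hδ0, hδ1⟩ := hδ
  have ha0 : 0 < a := one_pos.trans ha
  have hlam0 : 0 < lam := one_pos.trans_le hlam.1
  set t := logb a (u / lam)
  have hu_eq : u = lam * a ^ t := by
    rw [rpow_logb ha0 ha.ne' (div_pos (hlam0.trans_le hu) hlam0), mul_div_cancel₀ _ hlam0.ne']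
  have ht : 0 ≤ t := logb_nonneg ha ((one_le_div hlam0).mpr hu)
  obtain ⟨hint, hbound⟩ := integral_rpow_finalBidExponent_le ha ht hδ0 hδ1
  have hcost : ∫ s in δ..1, cost (fun i : ℕ => lam * a ^ ((i : ℝ) + s)) u ≤
      ∫ s in δ..1, lam * a / (a - 1) * a ^ finalBidExponent t s := by
    simp only [intervalIntegral.integral_of_le hδ1.le]
    refine integral_mono_of_nonneg (ae_of_all _ fun s => ?_) (hint.1.const_mul _)
      (ae_of_all _ fun s => hu_eq ▸ cost_geometric_le ha hlam0 t s)
    exact Finset.sum_nonneg fun j _ => by positivity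
  rw [intervalIntegral.integral_const_mul] at hcost
  have hscale : 0 ≤ 1 / ((1 - δ) * u) := by
    have := hlam0.trans_le hu
    have : 0 < 1 - δ := sub_pos.mpr hδ1
    positivity
  calc 1 / ((1 - δ) * u) * ∫ s in δ..1, cost (fun i : ℕ => lam * a ^ ((i : ℝ) + s)) u
      ≤ 1 / ((1 - δ) * u) * (lam * a / (a - 1) * (a ^ t * (a - a ^ δ) / log a)) := by
        gcongr
        refine hcost.trans (mul_le_mul_of_nonneg_left hbound ?_)
        have : 0 < a - 1 := sub_pos.mpr ha
        positivity
    _ = a * (a - a ^ δ) / ((a - 1) * (1 - δ) * log a) := by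
        rw [hu_eq]
        field_simp
end

section
/- Let ε ∈ (0,1), R = exp((1−ε)/ε), and let D_ε be the probability measure on [1,R] with density t ↦ ε/t on [1,R) together with an atom of mass ε at R. Let n ∈ ℕ and let 1 ≤ x_0 < x_1 < ⋯ < x_n be reals with x_{n−1} < R ≤ x_n, and set x_{−1} = 1. Then ∫ cost(X,u)/u dD_ε(u) = ε · Σ_{i=0}^{n} x_i/x_{i−1}, where X = (x_i)_{i=0}^{n}. -/
/-!
Against `D_ε` the integral is `ε ∫₁ᴿ cost(u)/u² du + ε cost(R)/R`. With `x_n` truncated to `R`,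
the cost is the constant partial sum `S_i = x_0 + ⋯ + x_i` on `(x_{i-1}, x_i]`, so the integral
part is `ε Σ S_i (1/x_{i-1} - 1/x_i)`; summation by parts, with the atom supplying the last term
`ε S_n / R`, turns this into `ε Σ x_i / x_{i-1}`.
-/

open MeasureTheory

/-- The measure `D_ε` on `[1,R]`: density `t ↦ ε / t` on `[1,R)` together with
an atom of mass `ε` at `R`. -/
noncomputable def Deps (ε R : ℝ) : Measure ℝ :=
  ((volume.restrict (Set.Ico (1:ℝ) R)).withDensity fun t => ENNReal.ofReal (ε / t))
    + (ENNReal.ofReal ε) • Measure.dirac R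

open Set Function
open scoped Interval

theorem integral_Deps {ε R : ℝ} (hε : 0 ≤ ε) (hR : 1 ≤ R) {f : ℝ → ℝ}
    (hf : IntervalIntegrable (fun u => f u / u) volume 1 R) :
    ∫ u, f u ∂Deps ε R = ε * (∫ u in (1:ℝ)..R, f u / u) + ε * f R := by
  have hdens : Measurable fun t : ℝ => ENNReal.ofReal (ε / t) := by fun_prop
  have hfin : ∀ᵐ t ∂volume.restrict (Ico (1:ℝ) R), ENNReal.ofReal (ε / t) < ⊤ :=
    ae_of_all _ fun _ => ENNReal.ofReal_lt_top
  have hsmul : (fun t => (ENNReal.ofReal (ε / t)).toReal • f t)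
      =ᵐ[volume.restrict (Ico (1:ℝ) R)] fun t => ε * (f t / t) := by
    filter_upwards [ae_restrict_mem measurableSet_Ico] with t ht
    rw [ENNReal.toReal_ofReal (div_nonneg hε (by linarith [ht.1])), smul_eq_mul]
    ring
  have hint : Integrable f ((volume.restrict (Ico (1:ℝ) R)).withDensity
      fun t => ENNReal.ofReal (ε / t)) := by
    rw [integrable_withDensity_iff_integrable_smul' hdens hfin]
    exact (((intervalIntegrable_iff_integrableOn_Ico_of_le hR).1 hf).const_mul ε).congr
      hsmul.symm
  rw [Deps, integral_add_measure hint
      ((integrable_dirac enorm_lt_top).smul_measure ENNReal.ofReal_ne_top),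
    integral_smul_measure, integral_dirac, integral_withDensity_eq_integral_toReal_smul hdens hfin,
    integral_congr_ae hsmul, integral_const_mul, integral_Ico_eq_integral_Ioc,
    ← intervalIntegral.integral_of_le hR, ENNReal.toReal_ofReal hε, smul_eq_mul]

theorem intervalIntegrable_inv_sq {a b : ℝ} (ha : 0 < a) (hb : 0 < b) :
    IntervalIntegrable (fun u : ℝ => (u ^ 2)⁻¹) volume a b := by
  simpa using
    intervalIntegral.intervalIntegrable_zpow (n := -2) (Or.inr (notMem_uIcc_of_lt ha hb))

theorem integral_inv_sq {a b : ℝ} (ha : 0 < a) (hb : 0 < b) :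
    ∫ u in a..b, (u ^ 2)⁻¹ = a⁻¹ - b⁻¹ := by
  have := integral_zpow (n := -2) (Or.inr ⟨by norm_num, notMem_uIcc_of_lt ha hb⟩)
  simp only [zpow_neg, zpow_ofNat] at this
  rw [this]
  norm_num
  ring

section StepFunction

variable {p : ℕ → ℝ} {f g : ℝ → ℝ} {c : ℕ → ℝ} {m : ℕ}

theorem intervalIntegrable_of_eqOn_uIoc
    (hg : ∀ i < m, IntervalIntegrable g volume (p i) (p (i + 1)))
    (hf : ∀ i < m, EqOn f (fun u => c i * g u) (Ι (p i) (p (i + 1)))) :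
    IntervalIntegrable f volume (p 0) (p m) :=
  IntervalIntegrable.trans_iterate fun i hi => ((hg i hi).const_mul (c i)).congr (hf i hi).symm

theorem intervalIntegral_eq_sum_of_eqOn_uIoc
    (hg : ∀ i < m, IntervalIntegrable g volume (p i) (p (i + 1)))
    (hf : ∀ i < m, EqOn f (fun u => c i * g u) (Ι (p i) (p (i + 1)))) :
    ∫ u in p 0..p m, f u = ∑ i ∈ Finset.range m, c i * ∫ u in p i..p (i + 1), g u := by
  rw [← intervalIntegral.sum_integral_adjacent_intervals fun i hi =>
    ((hg i hi).const_mul (c i)).congr (hf i hi).symm]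
  refine Finset.sum_congr rfl fun i hi => ?_
  rw [← intervalIntegral.integral_const_mul]
  exact intervalIntegral.integral_congr_ae
    (Filter.Eventually.of_forall fun u hu => hf i (Finset.mem_range.1 hi) hu)

end StepFunction

theorem sum_range_partialSum_mul_sub_add {α : Type*} [CommRing α] (x a : ℕ → α) (m : ℕ) :
    ∑ i ∈ Finset.range m, (∑ j ∈ Finset.range (i + 1), x j) * (a i - a (i + 1))
      + (∑ j ∈ Finset.range m, x j) * a m = ∑ i ∈ Finset.range m, x i * a i := by
  induction m with
  | zero => simp
  | succ m ih =>
    rw [Finset.sum_range_succ, Finset.sum_range_succ x,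
      Finset.sum_range_succ (fun i => x i * a i)]
    linear_combination ih

/-- The paper's `x_{i-1}`, with the convention `x_{-1} = 1`. -/
def prevBid (X : ℕ → ℝ) (i : ℕ) : ℝ := if i = 0 then 1 else X (i - 1)

@[simp] theorem prevBid_zero (X : ℕ → ℝ) : prevBid X 0 = 1 := rfl

@[simp] theorem prevBid_succ (X : ℕ → ℝ) (i : ℕ) : prevBid X (i + 1) = X i := rfl

theorem monotoneOn_prevBid {X : ℕ → ℝ} {n : ℕ} (hX : MonotoneOn X (Iic n)) (h1 : 1 ≤ X 0) :
    MonotoneOn (prevBid X) (Iic (n + 1)) := by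
  rintro (_ | i) hi (_ | j) hj hij <;> simp only [mem_Iic] at hi hj
  · exact le_rfl
  · exact h1.trans (hX (by simp) (by simp; omega) (Nat.zero_le j))
  · omega
  · exact hX (by simp; omega) (by simp; omega) (by omega)

theorem costIdx_eq {X : ℕ → ℝ} {u : ℝ} {i : ℕ} (hle : u ≤ X i) (hlt : ∀ j < i, X j < u) :
    costIdx X u = i :=
  le_antisymm (Nat.sInf_le hle) (le_csInf ⟨i, hle⟩ fun j hj => not_lt.1 fun hji =>
    (hlt j hji).not_ge hj)

theorem cost_eq_of_mem_Ioc {X : ℕ → ℝ} {u : ℝ} {i : ℕ} (hX : MonotoneOn X (Iic i))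
    (hu : u ∈ Ioc (prevBid X i) (X i)) : cost X u = ∑ j ∈ Finset.range (i + 1), X j := by
  rw [cost, costIdx_eq hu.2]
  intro j hj
  obtain ⟨k, rfl⟩ : ∃ k, i = k + 1 := ⟨i - 1, by omega⟩
  exact (hX (by simp; omega) (by simp) (by omega)).trans_lt hu.1

/-! Replacing the last bid `x n` by `R` turns the bids into the breakpoints
`1 = p 0 ≤ p 1 ≤ ⋯ ≤ p (n + 1) = R`, `p = prevBid (update x n R)`, between which the cost is
constant. -/

section Truncation

variable {x : ℕ → ℝ} {n : ℕ} {R : ℝ}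

theorem prevBid_update_of_le {i : ℕ} (hi : i ≤ n) : prevBid (update x n R) i = prevBid x i := by
  rcases i with _ | i
  · rfl
  · exact update_of_ne (show i < n by omega).ne _ _

theorem monotoneOn_prevBid_update (hx : MonotoneOn x (Iic n)) (hx0 : 1 ≤ x 0)
    (hprev : ∀ i < n, x i ≤ R) (hR : 1 ≤ R) :
    MonotoneOn (prevBid (update x n R)) (Iic (n + 1)) := by
  refine monotoneOn_prevBid (fun i hi j hj hij => ?_) ?_
  · simp only [mem_Iic] at hi hj
    rcases hj.lt_or_eq with hj | rfl
    · rw [update_of_ne hj.ne, update_of_ne (hij.trans_lt hj).ne]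
      exact hx (by simp; omega) (by simp; omega) hij
    · rw [update_self]
      rcases hi.lt_or_eq with hi | rfl
      · rw [update_of_ne hi.ne]; exact hprev i hi
      · rw [update_self]
  · rcases n.eq_zero_or_pos with rfl | hn
    · rwa [update_self]
    · rwa [update_of_ne hn.ne]

theorem prevBid_update_pos (hx : MonotoneOn x (Iic n)) (hx0 : 1 ≤ x 0)
    (hprev : ∀ i < n, x i ≤ R) (hR : 1 ≤ R) {i : ℕ} (hi : i ≤ n + 1) :
    0 < prevBid (update x n R) i :=
  one_pos.trans_le <| monotoneOn_prevBid_update hx hx0 hprev hR (by simp) (by simpa using hi)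
    (Nat.zero_le i)

theorem eqOn_cost_div_div (hx : MonotoneOn x (Iic n)) (hx0 : 1 ≤ x 0)
    (hprev : ∀ i < n, x i ≤ R) (hxn : R ≤ x n) (hR : 1 ≤ R) {i : ℕ} (hi : i < n + 1) :
    EqOn (fun u => cost x u / u / u) (fun u => (∑ j ∈ Finset.range (i + 1), x j) * (u ^ 2)⁻¹)
      (Ι (prevBid (update x n R) i) (prevBid (update x n R) (i + 1))) := by
  intro u hu
  have hle : prevBid (update x n R) i ≤ prevBid (update x n R) (i + 1) :=
    monotoneOn_prevBid_update hx hx0 hprev hR (by simp; omega) (by simp; omega) (by omega)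
  rw [uIoc_of_le hle, prevBid_succ] at hu
  have hzx : update x n R i ≤ x i := by
    rcases (Nat.le_of_lt_succ hi).lt_or_eq with h | rfl
    · rw [update_of_ne h.ne]
    · rwa [update_self]
  have hu0 : u ≠ 0 := ((prevBid_update_pos hx hx0 hprev hR (by omega)).trans hu.1).ne'
  have hux : u ∈ Ioc (prevBid x i) (x i) :=
    ⟨prevBid_update_of_le (show i ≤ n by omega) ▸ hu.1, hu.2.trans hzx⟩
  simp only [cost_eq_of_mem_Ioc (hx.mono (Iic_subset_Iic.2 (show i ≤ n by omega))) hux]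
  field_simp

theorem intervalIntegrable_cost_div_div (hx : MonotoneOn x (Iic n)) (hx0 : 1 ≤ x 0)
    (hprev : ∀ i < n, x i ≤ R) (hxn : R ≤ x n) (hR : 1 ≤ R) :
    IntervalIntegrable (fun u => cost x u / u / u) volume 1 R := by
  have := intervalIntegrable_of_eqOn_uIoc
    (fun i hi => intervalIntegrable_inv_sq (prevBid_update_pos hx hx0 hprev hR hi.le)
      (prevBid_update_pos hx hx0 hprev hR hi))
    (fun i hi => eqOn_cost_div_div hx hx0 hprev hxn hR hi)
  rwa [prevBid_zero, prevBid_succ, update_self] at this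

theorem integral_cost_div_div_add (hx : MonotoneOn x (Iic n)) (hx0 : 1 ≤ x 0)
    (hprev : ∀ i < n, x i < R) (hxn : R ≤ x n) (hR : 1 ≤ R) :
    (∫ u in (1:ℝ)..R, cost x u / u / u) + cost x R / R
      = ∑ i ∈ Finset.range (n + 1), x i / prevBid x i := by
  have hprev' : ∀ i < n, x i ≤ R := fun i hi => (hprev i hi).le
  have hp_pos {i : ℕ} (hi : i ≤ n + 1) := prevBid_update_pos hx hx0 hprev' hR hi
  have hpieces := intervalIntegral_eq_sum_of_eqOn_uIoc
    (fun i hi => intervalIntegrable_inv_sq (hp_pos hi.le) (hp_pos hi))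
    (fun i hi => eqOn_cost_div_div hx hx0 hprev' hxn hR hi)
  rw [prevBid_zero, prevBid_succ, update_self] at hpieces
  have habel := sum_range_partialSum_mul_sub_add x (fun i => (prevBid (update x n R) i)⁻¹) (n + 1)
  rw [prevBid_succ, update_self] at habel
  have hbids : ∑ i ∈ Finset.range (n + 1), x i / prevBid x i
      = ∑ i ∈ Finset.range (n + 1), x i * (prevBid (update x n R) i)⁻¹ :=
    Finset.sum_congr rfl fun i hi => by
      rw [prevBid_update_of_le (Nat.lt_succ_iff.1 (Finset.mem_range.1 hi)), div_eq_mul_inv]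
  rw [hpieces, cost, costIdx_eq hxn hprev, div_eq_mul_inv, hbids, ← habel]
  congr 1
  refine Finset.sum_congr rfl fun i hi => ?_
  have hi : i < n + 1 := Finset.mem_range.1 hi
  rw [integral_inv_sq (hp_pos hi.le) (hp_pos hi)]

end Truncation

theorem stmt9 (ε : ℝ) (hε : ε ∈ Set.Ioo (0:ℝ) 1) (R : ℝ)
    (hR : R = Real.exp ((1 - ε) / ε))
    (n : ℕ) (x : ℕ → ℝ) (hx0 : 1 ≤ x 0) (hmono : ∀ i, i < n → x i < x (i + 1))
    (hxn : R ≤ x n) (hprev : ∀ i, i < n → x i < R) :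
    ∫ u, cost x u / u ∂(Deps ε R) =
      ε * ∑ i ∈ Finset.range (n + 1), x i / (if i = 0 then 1 else x (i - 1)) := by
  obtain ⟨hε0, hε1⟩ := hε
  have hR1 : 1 ≤ R := hR ▸ Real.one_le_exp (div_nonneg (by linarith) hε0.le)
  have hx : MonotoneOn x (Iic n) :=
    (strictMonoOn_Iic_of_lt_succ fun m hm => by simpa using hmono m hm).monotoneOn
  rw [integral_Deps hε0.le hR1
      (intervalIntegrable_cost_div_div hx hx0 (fun i hi => (hprev i hi).le) hxn hR1),
    ← mul_add, integral_cost_div_div_add hx hx0 hprev hxn hR1]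
  rfl
end

section
/- Let ε ∈ (0,1), R = exp((1−ε)/ε), let n ≥ 1 be an integer, and let x_{−1} = 1 ≤ x_0 ≤ x_1 ≤ ⋯ ≤ x_n = R be positive reals. Set ρ_i = x_i/x_{i−1} for 0 ≤ i ≤ n and a = ρ_n. Then for every λ > 0, ε · Σ_{i=0}^{n} ρ_i + λ·(1 + 1/a) ≥ (1−ε)·(R/a)^{1/n} / ln(R^{1/n}) + ε·a + λ + λ/a. -/
/-! The ratios `ρ_0, …, ρ_{n-1}` telescope to `x_{n-1} = R / a`, so by AM-GM their sum is at least
`n (R / a)^{1/n}`. Since `ln R^{1/n} = (1 - ε) / (n ε)`, this is the first term on the left divided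
by `ε`; the remaining terms `ε a` and `λ (1 + 1/a)` appear on both sides. -/

open Finset

theorem Real.card_mul_prod_rpow_inv_card_le_sum {ι : Type*} {s : Finset ι} (hs : s.Nonempty)
    {z : ι → ℝ} (hz : ∀ i ∈ s, 0 ≤ z i) :
    #s * (∏ i ∈ s, z i) ^ ((#s : ℝ)⁻¹) ≤ ∑ i ∈ s, z i := by
  have hcard : (0 : ℝ) < #s := by exact_mod_cast hs.card_pos
  have := Real.geom_mean_le_arith_mean s (fun _ => 1) z (fun _ _ => zero_le_one)
    (by simpa using hcard) hz
  simp only [Real.rpow_one, sum_const, nsmul_eq_mul, mul_one, one_mul] at this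
  rwa [le_div_iff₀' hcard] at this

-- The paper's `ρ_i = x_i / x_{i-1}`, with `x_{-1} = 1`.
def bidRatio {K : Type*} [DivisionRing K] (x : ℕ → K) (i : ℕ) : K :=
  x i / if i = 0 then 1 else x (i - 1)

section bidRatio

variable {K : Type*} [Field K]

@[simp]
theorem bidRatio_zero (x : ℕ → K) : bidRatio x 0 = x 0 := by
  simp [bidRatio]

@[simp]
theorem bidRatio_succ (x : ℕ → K) (i : ℕ) : bidRatio x (i + 1) = x (i + 1) / x i := by
  simp [bidRatio]

theorem prod_range_succ_bidRatio {x : ℕ → K} {m : ℕ} (hx : ∀ i < m, x i ≠ 0) :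
    ∏ i ∈ range (m + 1), bidRatio x i = x m := by
  induction m with
  | zero => simp
  | succ m ih =>
    rw [prod_range_succ, ih fun i hi => hx i (by omega), bidRatio_succ,
      mul_div_cancel₀ _ (hx m m.lt_succ_self)]

end bidRatio

theorem card_mul_rpow_le_sum_range_bidRatio {x : ℕ → ℝ} {m : ℕ} (hx : ∀ i ≤ m, 0 < x i) :
    (m + 1) * x m ^ (1 / (m + 1 : ℝ)) ≤ ∑ i ∈ range (m + 1), bidRatio x i := by
  have hratio : ∀ i ∈ range (m + 1), 0 ≤ bidRatio x i := by
    intro i hi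
    cases i with
    | zero => simpa using (hx 0 m.zero_le).le
    | succ i =>
      have := mem_range.mp hi
      simpa using div_nonneg (hx (i + 1) (by omega)).le (hx i (by omega)).le
  have := Real.card_mul_prod_rpow_inv_card_le_sum nonempty_range_add_one hratio
  rw [prod_range_succ_bidRatio fun i hi => (hx i hi.le).ne'] at this
  simpa using this

theorem stmt11 (ε : ℝ) (hε : ε ∈ Set.Ioo (0:ℝ) 1) (R : ℝ)
    (hR : R = Real.exp ((1 - ε) / ε))
    (n : ℕ) (hn : 1 ≤ n) (x : ℕ → ℝ) (hx0 : 1 ≤ x 0)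
    (hmono : ∀ i, i < n → x i ≤ x (i + 1)) (hxn : x n = R) :
    ∀ lam : ℝ, 0 < lam →
      (1 - ε) * ((R / (x n / x (n - 1))) ^ (1 / (n : ℝ)) /
            Real.log (R ^ (1 / (n : ℝ))))
          + ε * (x n / x (n - 1)) + lam + lam / (x n / x (n - 1)) ≤
        ε * (∑ i ∈ Finset.range (n + 1), x i / (if i = 0 then 1 else x (i - 1)))
          + lam * (1 + 1 / (x n / x (n - 1))) := by
  intro lam _
  obtain ⟨hε0, hε1⟩ := hε
  obtain ⟨m, rfl⟩ : ∃ m, n = m + 1 := ⟨n - 1, by omega⟩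
  have hmonoOn : MonotoneOn x (Set.Iic (m + 1)) :=
    monotoneOn_of_le_succ Set.ordConnected_Iic fun i _ _ hi => hmono i (Order.succ_le_iff.mp hi)
  have hpos : ∀ i ≤ m + 1, 0 < x i := fun i hi =>
    one_pos.trans_le (hx0.trans (hmonoOn (Set.mem_Iic.mpr m.succ.zero_le) hi i.zero_le))
  have hRa : R / (x (m + 1) / x m) = x m := by
    rw [← hxn]; field_simp [(hpos m m.le_succ).ne', (hpos (m + 1) le_rfl).ne']
  have hlog : Real.log (R ^ (1 / ((m + 1 : ℕ) : ℝ))) = (1 - ε) / ε / (m + 1) := by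
    rw [hR, Real.log_rpow (Real.exp_pos _), Real.log_exp]; push_cast; ring
  have hfirst_term : (1 - ε) * (x m ^ (1 / ((m + 1 : ℕ) : ℝ)) / ((1 - ε) / ε / (m + 1)))
      ≤ ε * ∑ i ∈ range (m + 1), bidRatio x i :=
    calc _ = ε * ((m + 1) * x m ^ (1 / (m + 1 : ℝ))) := by
          have : 1 - ε ≠ 0 := by linarith
          push_cast; field_simp
      _ ≤ _ := mul_le_mul_of_nonneg_left
          (card_mul_rpow_le_sum_range_bidRatio fun i hi => hpos i (by omega)) hε0.le
  change _ ≤ ε * ∑ i ∈ range (m + 2), bidRatio x i + _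
  rw [Nat.add_sub_cancel, hRa, hlog, sum_range_succ, bidRatio_succ, mul_add, mul_one_add,
    mul_one_div]
  linarith
end
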